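/- Let A and B be bounded linear operators on a complex Hilbert space H. Then ω([[O, A],[B, O]]) ≤ sqrt( max{ω(AB), ω(BA)} + inf over λ ∈ ℂ of ‖[[−λI, A],[B, −λI]]‖² ), where [[−λI, A],[B, −λI]] is the operator on H ⊕ H sending (x, y) to (−λx + Ay, Bx − λy). -/

import Mathlib

open ContinuousLinearMap

/-- The numerical radius of a bounded operator on a complex inner product space:
`ω(T) = sup { |⟨Tx, x⟩| : ‖x‖ = 1 }`. -/
noncomputable def numRadius {E : Type*} [NormedAddCommGroup E] [InnerProductSpace ℂ E]
    (T : E →L[ℂ] E) : ℝ :=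
  ⨆ x : { x : E // ‖x‖ = 1 }, ‖(inner ℂ (T x) (x : E) : ℂ)‖

/-- The block operator `[[O, A], [B, O]]` on the Hilbert space direct sum `H ⊕₂ H`,
sending `(x, y)` to `(A y, B x)`. -/
noncomputable def blockOp {H : Type*} [NormedAddCommGroup H] [InnerProductSpace ℂ H]
    (A B : H →L[ℂ] H) : WithLp 2 (H × H) →L[ℂ] WithLp 2 (H × H) :=
  ((WithLp.prodContinuousLinearEquiv 2 ℂ H H).symm : (H × H) →L[ℂ] WithLp 2 (H × H)) ∘L
    ((A ∘L ContinuousLinearMap.snd ℂ H H).prod (B ∘L ContinuousLinearMap.fst ℂ H H)) ∘L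
    ((WithLp.prodContinuousLinearEquiv 2 ℂ H H) : WithLp 2 (H × H) →L[ℂ] H × H)
/-!
For a unit vector `z`, a scalar `λ`, `S = T - λ` and `d = ⟪z, S z⟫`, the quantity
`⟪z, T z⟫² - ⟪z, T² z⟫` does not change when `T` is replaced by `S`, so it equals
`d² - ⟪z, S² z⟫ = ⟪z, S (d z - S z)⟫`. Since `d z` is the orthogonal projection of `S z` onto `ℂ z`,
`‖d z - S z‖ ≤ ‖S z‖`, and the modulus is at most `‖S‖²`. Hence `ω(T)² ≤ ω(T²) + ‖T - λ‖²`
for every `λ`. For `T = [[O, A], [B, O]]`, `T² = diag(AB, BA)`, and splitting a unit vector into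
its two components bounds `ω(T²)` by `max {ω(AB), ω(BA)}`.
-/

section NumRadius

variable {E : Type*} [NormedAddCommGroup E] [InnerProductSpace ℂ E]

lemma numRadius_bddAbove (T : E →L[ℂ] E) :
    BddAbove (Set.range fun x : { x : E // ‖x‖ = 1 } => ‖(inner ℂ (T x) (x : E) : ℂ)‖) := by
  refine ⟨‖T‖, ?_⟩
  rintro r ⟨⟨x, hx⟩, rfl⟩
  calc ‖(inner ℂ (T x) x : ℂ)‖ ≤ ‖T x‖ * ‖x‖ := norm_inner_le_norm _ _
    _ ≤ ‖T‖ * ‖x‖ * ‖x‖ := by gcongr; exact T.le_opNorm x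
    _ = ‖T‖ := by rw [hx]; ring

lemma norm_inner_le_numRadius {T : E →L[ℂ] E} {x : E} (hx : ‖x‖ = 1) :
    ‖(inner ℂ (T x) x : ℂ)‖ ≤ numRadius T :=
  le_ciSup (numRadius_bddAbove T) ⟨x, hx⟩

lemma norm_inner_le_numRadius_mul_sq (T : E →L[ℂ] E) (x : E) :
    ‖(inner ℂ (T x) x : ℂ)‖ ≤ numRadius T * ‖x‖ ^ 2 := by
  rcases eq_or_ne x 0 with rfl | hx
  · simp
  set u : E := (‖x‖⁻¹ : ℂ) • x
  have hxu : x = (‖x‖ : ℂ) • u := by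
    rw [smul_smul, mul_inv_cancel₀ (by simpa using hx), one_smul]
  have hu : ‖u‖ = 1 := norm_smul_inv_norm hx
  calc ‖(inner ℂ (T x) x : ℂ)‖ = ‖(inner ℂ (T u) u : ℂ)‖ * ‖x‖ ^ 2 := by
        conv_lhs => rw [hxu]
        simp only [map_smul, inner_smul_left, inner_smul_right, norm_mul, RCLike.norm_conj,
          Complex.norm_real, norm_norm]
        ring
    _ ≤ numRadius T * ‖x‖ ^ 2 := by gcongr; exact norm_inner_le_numRadius hu

lemma numRadius_nonneg (T : E →L[ℂ] E) : 0 ≤ numRadius T :=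
  Real.iSup_nonneg fun _ => norm_nonneg _

lemma numRadius_le {T : E →L[ℂ] E} {c : ℝ} (hc : 0 ≤ c)
    (h : ∀ x : E, ‖x‖ = 1 → ‖(inner ℂ (T x) x : ℂ)‖ ≤ c) : numRadius T ≤ c :=
  Real.iSup_le (fun x => h x x.2) hc

lemma norm_sub_inner_smul_le {z : E} (hz : ‖z‖ = 1) (x : E) :
    ‖x - (inner ℂ z x : ℂ) • z‖ ≤ ‖x‖ := by
  rw [← Submodule.starProjection_unit_singleton ℂ hz,
    ← Submodule.starProjection_orthogonal_val]
  exact Submodule.norm_starProjection_apply_le _ x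

lemma norm_inner_sq_le_norm_inner_apply_apply_add (T : E →L[ℂ] E) {z : E} (hz : ‖z‖ = 1)
    (lam : ℂ) :
    ‖(inner ℂ (T z) z : ℂ)‖ ^ 2 ≤ ‖(inner ℂ (T (T z)) z : ℂ)‖ + ‖T - lam • 1‖ ^ 2 := by
  set S := T - lam • 1
  set d : ℂ := inner ℂ z (S z)
  have hzz : (inner ℂ z z : ℂ) = 1 := by simp [inner_self_eq_norm_sq_to_K, hz]
  have key : (inner ℂ z (T z) : ℂ) ^ 2 = inner ℂ z (T (T z)) + inner ℂ z (S (d • z - S z)) := by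
    simp only [d, S, sub_apply, smul_apply, one_apply_eq_self, map_sub, map_smul,
      inner_sub_right, inner_smul_right, hzz]
    ring
  have hS : ‖(inner ℂ z (S (d • z - S z)) : ℂ)‖ ≤ ‖S‖ ^ 2 :=
    calc _ ≤ ‖z‖ * ‖S (d • z - S z)‖ := norm_inner_le_norm _ _
      _ ≤ ‖S‖ * ‖S z - d • z‖ := by rw [hz, one_mul, norm_sub_rev (S z)]; exact S.le_opNorm _
      _ ≤ ‖S‖ * (‖S‖ * ‖z‖) := by
        gcongr; exact (norm_sub_inner_smul_le hz _).trans (S.le_opNorm z)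
      _ = ‖S‖ ^ 2 := by rw [hz]; ring
  rw [norm_inner_symm (T z), norm_inner_symm (T (T z)), ← norm_pow, key]
  exact (norm_add_le _ _).trans (by gcongr)

theorem numRadius_le_sqrt_numRadius_mul_self_add_iInf (T : E →L[ℂ] E) :
    numRadius T ≤ √(numRadius (T * T) + ⨅ lam : ℂ, ‖T - lam • 1‖ ^ 2) := by
  refine numRadius_le (Real.sqrt_nonneg _) fun z hz => Real.le_sqrt_of_sq_le ?_
  have hT2 : ‖(inner ℂ (T (T z)) z : ℂ)‖ ≤ numRadius (T * T) :=
    norm_inner_le_numRadius (T := T * T) hz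
  have hinf : ‖(inner ℂ (T z) z : ℂ)‖ ^ 2 - numRadius (T * T) ≤ ⨅ lam : ℂ, ‖T - lam • 1‖ ^ 2 :=
    le_ciInf fun lam => by linarith [norm_inner_sq_le_norm_inner_apply_apply_add T hz lam]
  linarith

end NumRadius

section BlockOp

variable {H : Type*} [NormedAddCommGroup H] [InnerProductSpace ℂ H]

lemma inner_blockOp_mul_self_apply (A B : H →L[ℂ] H) (z : WithLp 2 (H × H)) :
    (inner ℂ ((blockOp A B * blockOp A B) z) z : ℂ) =
      inner ℂ ((A * B) z.fst) z.fst + inner ℂ ((B * A) z.snd) z.snd := by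
  rw [WithLp.prod_inner_apply]; rfl

lemma numRadius_blockOp_mul_self_le (A B : H →L[ℂ] H) :
    numRadius (blockOp A B * blockOp A B) ≤ max (numRadius (A * B)) (numRadius (B * A)) := by
  set M := max (numRadius (A * B)) (numRadius (B * A))
  refine numRadius_le ((numRadius_nonneg _).trans (le_max_left _ _)) fun z hz => ?_
  have hsum : ‖z.fst‖ ^ 2 + ‖z.snd‖ ^ 2 = 1 := by
    rw [← WithLp.prod_norm_sq_eq_of_L2, hz, one_pow]
  rw [inner_blockOp_mul_self_apply]
  calc _ ≤ numRadius (A * B) * ‖z.fst‖ ^ 2 + numRadius (B * A) * ‖z.snd‖ ^ 2 :=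
        (norm_add_le _ _).trans
          (add_le_add (norm_inner_le_numRadius_mul_sq _ _) (norm_inner_le_numRadius_mul_sq _ _))
    _ ≤ M * ‖z.fst‖ ^ 2 + M * ‖z.snd‖ ^ 2 := by gcongr <;> simp [M]
    _ = M := by rw [← mul_add, hsum, mul_one]

end BlockOp

theorem stmt_18_general {H : Type*} [NormedAddCommGroup H] [InnerProductSpace ℂ H]
    (A B : H →L[ℂ] H) :
    numRadius (blockOp A B) ≤
      Real.sqrt
        (max (numRadius (A * B)) (numRadius (B * A)) +
          ⨅ lam : ℂ, ‖blockOp A B - lam • 1‖ ^ 2) :=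
  (numRadius_le_sqrt_numRadius_mul_self_add_iInf _).trans <| by
    gcongr; exact numRadius_blockOp_mul_self_le A B

/-- `ω([[O,A],[B,O]]) ≤ sqrt( max{ω(AB), ω(BA)} + inf_{λ ∈ ℂ} ‖[[−λI,A],[B,−λI]]‖² )`. -/
theorem stmt_18 {H : Type*} [NormedAddCommGroup H] [InnerProductSpace ℂ H] [CompleteSpace H]
    (A B : H →L[ℂ] H) :
    numRadius (blockOp A B) ≤
      Real.sqrt
        (max (numRadius (A * B)) (numRadius (B * A)) +
          ⨅ lam : ℂ, ‖blockOp A B - lam • 1‖ ^ 2) :=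
  stmt_18_general A B
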